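/- The q-expansion of g := Π_q/Π_{q^7} begins g = q^{-3/2} + 2q^{-1/2} + q^{1/2} + 2q^{3/2} + 2q^{5/2} + O(q^{7/2}); i.e., q^{3/2}·(Π_q/Π_{q^7}) - (1 + 2q + q^2 + 2q^3 + 2q^4) = O(q^5) as q → 0. -/

import Mathlib

open Complex Filter

noncomputable def E (τ s : ℂ) : ℂ := Complex.exp (2 * Real.pi * Complex.I * τ * s)

/-- q-Pochhammer infinite product `(a; q)_∞ = ∏_{n≥0} (1 - a qⁿ)`. -/
noncomputable def qPoch (a q : ℂ) : ℂ := ∏' n : ℕ, (1 - a * q ^ n)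

/-- Gosper's q-constant `Π_{q^k}` where `q = e^{2πiτ}` and `q^{1/4} = e^{πiτ/2}`. -/
noncomputable def PiQ (τ : ℂ) (k : ℕ) : ℂ :=
  E τ (k / 4) * qPoch (E τ (2 * k)) (E τ (2 * k)) ^ 2 / qPoch (E τ k) (E τ (2 * k)) ^ 2

namespace GQE

lemma factor_ne_zero {u : ℂ} (hu : ‖u‖ < 1) : (1 : ℂ) - u ≠ 0 := by
  intro h
  have h1 : u = 1 := by linear_combination -h
  rw [h1] at hu; simp at hu

lemma norm_log_le {u : ℂ} (hu : ‖u‖ ≤ 1/2) : ‖Complex.log (1 - u)‖ ≤ (3/2) * ‖u‖ := by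
  have := Complex.norm_log_one_add_half_le_self (z := -u) (by simpa using hu)
  simpa [sub_eq_add_neg] using this

lemma term_norm_le {z w : ℂ} (hz : ‖z‖ ≤ 1/2) (hw : ‖w‖ ≤ 1/2) (n : ℕ) :
    ‖z * w ^ n‖ ≤ ‖z‖ * ‖w‖ ^ n ∧ ‖z * w ^ n‖ ≤ 1/2 := by
  have h1 : ‖z * w ^ n‖ = ‖z‖ * ‖w‖ ^ n := by rw [norm_mul, norm_pow]
  have h2 : ‖w‖ ^ n ≤ 1 := pow_le_one₀ (norm_nonneg w) (by linarith)
  constructor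
  · exact le_of_eq h1
  · rw [h1]
    nlinarith [norm_nonneg z, pow_nonneg (norm_nonneg w) n]

lemma log_summable {z w : ℂ} (hz : ‖z‖ ≤ 1/2) (hw : ‖w‖ ≤ 1/2) :
    Summable (fun n : ℕ => Complex.log (1 - z * w ^ n)) := by
  apply Summable.of_norm_bounded (g := fun n => (3/2) * ‖z‖ * ‖w‖ ^ n)
  · exact (summable_geometric_of_lt_one (norm_nonneg w) (by linarith)).mul_left _
  · intro n
    obtain ⟨h1, h2⟩ := term_norm_le hz hw n
    calc ‖Complex.log (1 - z * w ^ n)‖ ≤ (3/2) * ‖z * w ^ n‖ := norm_log_le h2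
    _ ≤ (3/2) * (‖z‖ * ‖w‖ ^ n) := by linarith
    _ = (3/2) * ‖z‖ * ‖w‖ ^ n := by ring

lemma prod_eq_exp {z w : ℂ} (hz : ‖z‖ ≤ 1/2) (hw : ‖w‖ ≤ 1/2) :
    (∏' n : ℕ, (1 - z * w ^ n)) = Complex.exp (∑' n : ℕ, Complex.log (1 - z * w ^ n)) := by
  have h := Complex.cexp_tsum_eq_tprod (ι := ℕ) (f := fun n => 1 - z * w ^ n)
    (fun n => factor_ne_zero (lt_of_le_of_lt (term_norm_le hz hw n).2 (by norm_num)))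
    (log_summable hz hw)
  exact h.symm

lemma sum_log_bound {z w : ℂ} (hz : ‖z‖ ≤ 1/2) (hw : ‖w‖ ≤ 1/2) :
    ‖∑' n : ℕ, Complex.log (1 - z * w ^ n)‖ ≤ 3 * ‖z‖ := by
  have hsg : Summable (fun n : ℕ => (3/2) * ‖z‖ * ‖w‖ ^ n) :=
    (summable_geometric_of_lt_one (norm_nonneg w) (by linarith)).mul_left _
  have hb : ∀ n : ℕ, ‖Complex.log (1 - z * w ^ n)‖ ≤ (3/2) * ‖z‖ * ‖w‖ ^ n := by
    intro n
    obtain ⟨h1, h2⟩ := term_norm_le hz hw n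
    calc ‖Complex.log (1 - z * w ^ n)‖ ≤ (3/2) * ‖z * w ^ n‖ := norm_log_le h2
    _ ≤ (3/2) * (‖z‖ * ‖w‖ ^ n) := by linarith
    _ = (3/2) * ‖z‖ * ‖w‖ ^ n := by ring
  have hsn : Summable (fun n : ℕ => ‖Complex.log (1 - z * w ^ n)‖) :=
    Summable.of_nonneg_of_le (fun n => norm_nonneg _) hb hsg
  calc ‖∑' n : ℕ, Complex.log (1 - z * w ^ n)‖ ≤ ∑' n : ℕ, ‖Complex.log (1 - z * w ^ n)‖ :=
        norm_tsum_le_tsum_norm hsn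
  _ ≤ ∑' n : ℕ, (3/2) * ‖z‖ * ‖w‖ ^ n := Summable.tsum_le_tsum hb hsn hsg
  _ = (3/2) * ‖z‖ * (1 - ‖w‖)⁻¹ := by
        rw [tsum_mul_left, tsum_geometric_of_lt_one (norm_nonneg w) (by linarith)]
  _ ≤ 3 * ‖z‖ := by
        have h1 : (1 - ‖w‖)⁻¹ ≤ 2 := by
          rw [inv_le_comm₀ (by linarith) (by norm_num)]
          linarith
        nlinarith [norm_nonneg z]

lemma prod_sub_one_bound {z w : ℂ} (hz : ‖z‖ ≤ 1/4) (hw : ‖w‖ ≤ 1/2) :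
    ‖(∏' n : ℕ, (1 - z * w ^ n)) - 1‖ ≤ 6 * ‖z‖ := by
  have hz' : ‖z‖ ≤ 1/2 := by linarith
  rw [prod_eq_exp hz' hw]
  have hL := sum_log_bound hz' hw
  have h1 : ‖∑' n : ℕ, Complex.log (1 - z * w ^ n)‖ ≤ 1 := by
    linarith
  have h2 := Complex.norm_exp_sub_one_le h1
  linarith

lemma prod_split {z w : ℂ} (hz : ‖z‖ ≤ 1/2) (hw : ‖w‖ ≤ 1/2) :
    (∏' n : ℕ, (1 - z * w ^ n))
      = (1 - z) * (1 - z * w) * ∏' n : ℕ, (1 - (z * w ^ 2) * w ^ n) := by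
  have hzw2 : ‖z * w ^ 2‖ ≤ 1/2 := by
    rw [norm_mul, norm_pow]
    nlinarith [norm_nonneg z, norm_nonneg w]
  have h0 : (1 : ℂ) - z ≠ 0 := factor_ne_zero (lt_of_le_of_lt hz (by norm_num))
  have h1 : (1 : ℂ) - z * w ≠ 0 := by
    apply factor_ne_zero
    rw [norm_mul]
    nlinarith [norm_nonneg z, norm_nonneg w]
  rw [prod_eq_exp hz hw, prod_eq_exp hzw2 hw,
    ← (log_summable hz hw).sum_add_tsum_nat_add 2]
  have ht : ∀ n : ℕ, Complex.log (1 - z * w ^ (n + 2)) = Complex.log (1 - z * w ^ 2 * w ^ n) := by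
    intro n; rw [pow_add]; ring_nf
  rw [tsum_congr ht, Complex.exp_add, Finset.sum_range_succ, Finset.sum_range_one,
    Complex.exp_add]
  simp only [pow_zero, mul_one, pow_one]
  rw [Complex.exp_log h0, Complex.exp_log h1]


lemma one_sub_bounds {u : ℂ} (hu : ‖u‖ ≤ 1/2) : 1/2 ≤ ‖1 - u‖ ∧ ‖1 - u‖ ≤ 3/2 := by
  have h := norm_sub_norm_le (1:ℂ) u
  have h2 := norm_sub_le (1:ℂ) u
  rw [norm_one] at h h2
  constructor <;> linarith

lemma one_add_bounds {e : ℂ} (he : ‖e‖ ≤ 1/2) : 1/2 ≤ ‖1 + e‖ ∧ ‖1 + e‖ ≤ 3/2 := by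
  have := one_sub_bounds (u := -e) (by simpa using he)
  simpa [sub_neg_eq_add] using this

lemma sq_sq_bound {e f : ℂ} (he : ‖e‖ ≤ 1/4) (hf : ‖f‖ ≤ 1/4) :
    ‖(1+e)^2 * (1+f)^2 - 1‖ ≤ 4 * (‖e‖ + ‖f‖) := by
  have key : (1+e)^2*(1+f)^2 - 1 = (e*(2+e)) * (1+f)^2 + f*(2+f) := by ring
  rw [key]
  have hf5 : ‖1 + f‖ ≤ 5/4 := by
    calc ‖1+f‖ ≤ ‖(1:ℂ)‖ + ‖f‖ := norm_add_le _ _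
    _ ≤ 5/4 := by rw [norm_one]; linarith
  have hfsq : ‖1+f‖^2 ≤ 25/16 := by nlinarith [norm_nonneg (1+f)]
  have h2e : ‖(2:ℂ) + e‖ ≤ 2 + ‖e‖ := by
    calc ‖(2:ℂ) + e‖ ≤ ‖(2:ℂ)‖ + ‖e‖ := norm_add_le _ _
    _ = 2 + ‖e‖ := by norm_num
  have h2f : ‖(2:ℂ) + f‖ ≤ 2 + ‖f‖ := by
    calc ‖(2:ℂ) + f‖ ≤ ‖(2:ℂ)‖ + ‖f‖ := norm_add_le _ _
    _ = 2 + ‖f‖ := by norm_num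
  calc ‖(e*(2+e)) * (1+f)^2 + f*(2+f)‖ ≤ ‖(e*(2+e)) * (1+f)^2‖ + ‖f*(2+f)‖ := norm_add_le _ _
  _ = ‖e‖ * ‖(2:ℂ)+e‖ * ‖1+f‖^2 + ‖f‖ * ‖(2:ℂ)+f‖ := by
      rw [norm_mul, norm_mul, norm_pow, norm_mul]
  _ = ‖e‖ * (‖(2:ℂ)+e‖ * ‖1+f‖^2) + ‖f‖ * ‖(2:ℂ)+f‖ := by ring
  _ ≤ 4 * (‖e‖ + ‖f‖) := by
      have h2e' : ‖(2:ℂ)+e‖ ≤ 9/4 := by linarith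
      have h2f' : ‖(2:ℂ)+f‖ ≤ 9/4 := by linarith
      have hprod : ‖(2:ℂ)+e‖ * ‖1+f‖^2 ≤ (9/4)*(25/16) :=
        mul_le_mul h2e' hfsq (by positivity) (by norm_num)
      have hB1 : ‖e‖*(‖(2:ℂ)+e‖*‖1+f‖^2) ≤ ‖e‖*((9/4)*(25/16)) :=
        mul_le_mul_of_nonneg_left hprod (norm_nonneg e)
      have hB2 : ‖f‖*‖(2:ℂ)+f‖ ≤ ‖f‖*(9/4) :=
        mul_le_mul_of_nonneg_left h2f' (norm_nonneg f)
      nlinarith [norm_nonneg e, norm_nonneg f]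

set_option maxHeartbeats 1000000 in
lemma final_bound {q e1 e2 e3 e4 : ℂ} (hq : ‖q‖ ≤ 1/2)
    (h1 : ‖e1‖ ≤ 3*‖q‖^5) (h2 : ‖e2‖ ≤ 6*‖q‖^5) (h3 : ‖e3‖ ≤ 2*‖q‖^5) (h4 : ‖e4‖ ≤ ‖q‖^5) :
    ‖((((1-q^2)*(1-q^2*q^2)*(1+e1)) * (1+e3)) / (((1-q)*(1-q*q^2)*(1+e2)) * (1+e4)))^2
      - (1 + 2*q + q^2 + 2*q^3 + 2*q^4)‖ ≤ 200000*‖q‖^5 := by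
  have hr0 : (0:ℝ) ≤ ‖q‖ := norm_nonneg q
  have hpow : ∀ k : ℕ, ‖q‖^k ≤ (1/2:ℝ)^k := fun k => pow_le_pow_left₀ hr0 hq k
  have hp2 : ‖q‖^2 ≤ 1/4 := by have := hpow 2; linarith
  have hp3 : ‖q‖^3 ≤ 1/8 := by have := hpow 3; linarith
  have hp4 : ‖q‖^4 ≤ 1/16 := by have := hpow 4; linarith
  have hq5 : ‖q‖^5 ≤ 1/32 := by have := hpow 5; linarith
  have he5 : (0:ℝ) ≤ ‖q‖^5 := pow_nonneg hr0 5
  -- smallness of the e's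
  have h1' : ‖e1‖ ≤ 1/4 := by linarith
  have h2' : ‖e2‖ ≤ 1/4 := by linarith
  have h3' : ‖e3‖ ≤ 1/4 := by linarith
  have h4' : ‖e4‖ ≤ 1/4 := by linarith
  -- factor bounds
  have hn1 := one_sub_bounds (u := q) hq
  have hn2 : ‖q*q^2‖ ≤ 1/2 := by
    rw [show q*q^2 = q^3 by ring, norm_pow]; linarith
  have hn2' := one_sub_bounds hn2
  have hn3 : ‖q^2‖ ≤ 1/2 := by rw [norm_pow]; linarith
  have hn3' := one_sub_bounds hn3
  have hn4 : ‖q^2*q^2‖ ≤ 1/2 := by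
    rw [show q^2*q^2 = q^4 by ring, norm_pow]; linarith
  have hn4' := one_sub_bounds hn4
  have ha2 := one_add_bounds (e := e2) (by linarith)
  have ha4 := one_add_bounds (e := e4) (by linarith)
  -- denominator
  set B : ℂ := ((1-q)*(1-q*q^2)*(1+e2)) * (1+e4) with hBdef
  have hBnorm : 1/16 ≤ ‖B‖ := by
    rw [hBdef, norm_mul, norm_mul, norm_mul]
    have m1 : (1/2:ℝ)*(1/2) ≤ ‖1-q‖*‖1-q*q^2‖ :=
      mul_le_mul hn1.1 hn2'.1 (by norm_num) (norm_nonneg _)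
    have m2 : ((1/2:ℝ)*(1/2))*(1/2) ≤ (‖1-q‖*‖1-q*q^2‖)*‖1+e2‖ :=
      mul_le_mul m1 ha2.1 (by norm_num) (by positivity)
    have m3 : (((1/2:ℝ)*(1/2))*(1/2))*(1/2) ≤ ((‖1-q‖*‖1-q*q^2‖)*‖1+e2‖)*‖1+e4‖ :=
      mul_le_mul m2 ha4.1 (by norm_num) (by positivity)
    linarith
  have hBne : B ≠ 0 := by
    intro h; rw [h, norm_zero] at hBnorm; norm_num at hBnorm
  set A : ℂ := (((1-q^2)*(1-q^2*q^2)*(1+e1)) * (1+e3)) with hAdef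
  set P : ℂ := 1 + 2*q + q^2 + 2*q^3 + 2*q^4 with hPdef
  have heq : (A/B)^2 - P = (A^2 - P*B^2)/B^2 := by field_simp
  rw [heq, norm_div, norm_pow]
  -- numerator decomposition
  set S : ℂ := (1-q)^2*(-2+q+2*q^2-q^5) with hSdef
  have hnum_eq : A^2 - P*B^2 = q^5*S + ((1-q^2)*(1-q^2*q^2))^2*((1+e1)^2*(1+e3)^2 - 1)
      - P*((1-q)*(1-q*q^2))^2*((1+e2)^2*(1+e4)^2 - 1) := by
    rw [hAdef, hBdef, hPdef, hSdef]; ring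
  -- bounds of pieces
  have hSb : ‖S‖ ≤ 9 := by
    rw [hSdef, norm_mul, norm_pow]
    have hs1 : ‖-2+q+2*q^2-q^5‖ ≤ 2 + ‖q‖ + 2*‖q‖^2 + ‖q‖^5 := by
      calc ‖-2+q+2*q^2-q^5‖ ≤ ‖-2+q+2*q^2‖ + ‖q^5‖ := norm_sub_le _ _
      _ ≤ ‖-2+q‖ + ‖2*q^2‖ + ‖q^5‖ := by linarith [norm_add_le (-2+q) (2*q^2)]
      _ ≤ ‖(-2:ℂ)‖ + ‖q‖ + ‖2*q^2‖ + ‖q^5‖ := by linarith [norm_add_le (-2:ℂ) q]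
      _ = 2 + ‖q‖ + 2*‖q‖^2 + ‖q‖^5 := by
          rw [norm_mul, norm_pow, norm_pow]; norm_num
    have hs2 : ‖-2+q+2*q^2-q^5‖ ≤ 4 := by linarith
    have hs3 : ‖1-q‖^2 ≤ 9/4 := by nlinarith [hn1.2, norm_nonneg (1-q)]
    have := mul_le_mul hs3 hs2 (norm_nonneg _) (by norm_num)
    linarith
  have hPb : ‖P‖ ≤ 3 := by
    rw [hPdef]
    calc ‖1 + 2*q + q^2 + 2*q^3 + 2*q^4‖
        ≤ ‖1 + 2*q + q^2 + 2*q^3‖ + ‖2*q^4‖ := norm_add_le _ _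
    _ ≤ ‖1 + 2*q + q^2‖ + ‖2*q^3‖ + ‖2*q^4‖ := by linarith [norm_add_le (1 + 2*q + q^2) (2*q^3)]
    _ ≤ ‖1 + 2*q‖ + ‖q^2‖ + ‖2*q^3‖ + ‖2*q^4‖ := by linarith [norm_add_le (1 + 2*q) (q^2)]
    _ ≤ ‖(1:ℂ)‖ + ‖2*q‖ + ‖q^2‖ + ‖2*q^3‖ + ‖2*q^4‖ := by linarith [norm_add_le (1:ℂ) (2*q)]
    _ = 1 + 2*‖q‖ + ‖q‖^2 + 2*‖q‖^3 + 2*‖q‖^4 := by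
        rw [norm_one, norm_mul, norm_mul, norm_mul, norm_pow, norm_pow, norm_pow]; norm_num
    _ ≤ 3 := by linarith
  have hE13 : ‖(1+e1)^2*(1+e3)^2 - 1‖ ≤ 20*‖q‖^5 := by
    have := sq_sq_bound h1' h3'
    linarith
  have hE24 : ‖(1+e2)^2*(1+e4)^2 - 1‖ ≤ 28*‖q‖^5 := by
    have := sq_sq_bound h2' h4'
    linarith
  have ha2b : ‖((1-q^2)*(1-q^2*q^2))^2‖ ≤ 6 := by
    rw [norm_pow, norm_mul]
    have m1 : ‖1-q^2‖*‖1-q^2*q^2‖ ≤ (3/2:ℝ)*(3/2) :=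
      mul_le_mul hn3'.2 hn4'.2 (norm_nonneg _) (by norm_num)
    nlinarith [norm_nonneg (1-q^2), norm_nonneg (1-q^2*q^2),
      mul_nonneg (norm_nonneg (1-q^2)) (norm_nonneg (1-q^2*q^2))]
  have hb2b : ‖((1-q)*(1-q*q^2))^2‖ ≤ 6 := by
    rw [norm_pow, norm_mul]
    have m1 : ‖1-q‖*‖1-q*q^2‖ ≤ (3/2:ℝ)*(3/2) :=
      mul_le_mul hn1.2 hn2'.2 (norm_nonneg _) (by norm_num)
    nlinarith [mul_nonneg (norm_nonneg (1-q)) (norm_nonneg (1-q*q^2))]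
  have hnum : ‖A^2 - P*B^2‖ ≤ 700*‖q‖^5 := by
    rw [hnum_eq]
    have t1 : ‖q^5*S‖ ≤ 9*‖q‖^5 := by
      rw [norm_mul, norm_pow]
      nlinarith [norm_nonneg S]
    have t2 : ‖((1-q^2)*(1-q^2*q^2))^2*((1+e1)^2*(1+e3)^2 - 1)‖ ≤ 120*‖q‖^5 := by
      rw [norm_mul]
      have := mul_le_mul ha2b hE13 (norm_nonneg _) (by norm_num)
      linarith
    have t3 : ‖P*((1-q)*(1-q*q^2))^2*((1+e2)^2*(1+e4)^2 - 1)‖ ≤ 504*‖q‖^5 := by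
      rw [norm_mul, norm_mul]
      have u1 : ‖P‖*‖((1-q)*(1-q*q^2))^2‖ ≤ 3*6 :=
        mul_le_mul hPb hb2b (norm_nonneg _) (by norm_num)
      have u2 : (‖P‖*‖((1-q)*(1-q*q^2))^2‖)*‖(1+e2)^2*(1+e4)^2 - 1‖ ≤ (3*6)*(28*‖q‖^5) :=
        mul_le_mul u1 hE24 (norm_nonneg _) (by norm_num)
      linarith
    calc ‖q^5*S + ((1-q^2)*(1-q^2*q^2))^2*((1+e1)^2*(1+e3)^2 - 1)
          - P*((1-q)*(1-q*q^2))^2*((1+e2)^2*(1+e4)^2 - 1)‖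
        ≤ ‖q^5*S + ((1-q^2)*(1-q^2*q^2))^2*((1+e1)^2*(1+e3)^2 - 1)‖
          + ‖P*((1-q)*(1-q*q^2))^2*((1+e2)^2*(1+e4)^2 - 1)‖ := norm_sub_le _ _
    _ ≤ ‖q^5*S‖ + ‖((1-q^2)*(1-q^2*q^2))^2*((1+e1)^2*(1+e3)^2 - 1)‖
          + ‖P*((1-q)*(1-q*q^2))^2*((1+e2)^2*(1+e4)^2 - 1)‖ := by
        linarith [norm_add_le (q^5*S) (((1-q^2)*(1-q^2*q^2))^2*((1+e1)^2*(1+e3)^2 - 1))]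
    _ ≤ 700*‖q‖^5 := by linarith
  have hBsq : (1/256:ℝ) ≤ ‖B‖^2 := by nlinarith
  have hB2pos : (0:ℝ) < ‖B‖^2 := by linarith
  calc ‖A^2 - P*B^2‖ / ‖B‖^2 ≤ (700*‖q‖^5) / (1/256:ℝ) := by
        apply div_le_div₀ (by positivity) hnum (by norm_num) hBsq
  _ ≤ 200000*‖q‖^5 := by linarith

end GQE

theorem g_q_expansion :
    ∃ C : ℝ, ∀ τ : ℂ, 0 < τ.im → ‖E τ 1‖ < 1/2 →
      ‖E τ (3/2) * (PiQ τ 1 / PiQ τ 7)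
        - (1 + 2 * E τ 1 + E τ 1 ^ 2 + 2 * E τ 1 ^ 3 + 2 * E τ 1 ^ 4)‖
      ≤ C * ‖E τ 1‖ ^ 5 := by
  refine ⟨200000, fun τ _ hq => ?_⟩
  set q : ℂ := E τ 1 with hqdef
  have hr : ‖q‖ ≤ 1/2 := le_of_lt hq
  have hr0 : (0:ℝ) ≤ ‖q‖ := norm_nonneg q
  have hpow : ∀ k : ℕ, ‖q‖^k ≤ (1/2:ℝ)^k := fun k => pow_le_pow_left₀ hr0 hr k
  -- powers of E
  have hEpow : ∀ n : ℕ, E τ (n : ℂ) = q ^ n := by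
    intro n
    rw [hqdef]
    simp only [E]
    rw [← Complex.exp_nat_mul]
    congr 1
    ring
  have hE2 : E τ 2 = q ^ 2 := by have := hEpow 2; push_cast at this; exact this
  have hE7 : E τ 7 = q ^ 7 := by have := hEpow 7; push_cast at this; exact this
  have hE14 : E τ 14 = q ^ 14 := by have := hEpow 14; push_cast at this; exact this
  have hPiQ1 : PiQ τ 1 = E τ (1/4) * qPoch (q^2) (q^2) ^ 2 / qPoch q (q^2) ^ 2 := by
    rw [PiQ]
    push_cast
    rw [show (2:ℂ) * 1 = 2 by norm_num, hE2, ← hqdef]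
  have hPiQ7 : PiQ τ 7 = E τ (7/4) * qPoch (q^14) (q^14) ^ 2 / qPoch (q^7) (q^14) ^ 2 := by
    rw [PiQ]
    push_cast
    rw [show (2:ℂ) * 7 = 14 by norm_num, hE14, hE7]
  -- norm smallness facts
  have hpow' : ∀ k : ℕ, ‖q^k‖ ≤ (1/2:ℝ)^k := by
    intro k; rw [norm_pow]; exact hpow k
  have hw2 : ‖q^2‖ ≤ 1/2 := le_trans (hpow' 2) (by norm_num)
  have hw14 : ‖q^14‖ ≤ 1/2 := le_trans (hpow' 14) (by norm_num)
  have hz1 : ‖q^2 * (q^2)^2‖ ≤ 1/4 := by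
    rw [show q^2*(q^2)^2 = q^6 by ring]; exact le_trans (hpow' 6) (by norm_num)
  have hz2 : ‖q * (q^2)^2‖ ≤ 1/4 := by
    rw [show q*(q^2)^2 = q^5 by ring]; exact le_trans (hpow' 5) (by norm_num)
  have hz3 : ‖q^7‖ ≤ 1/4 := le_trans (hpow' 7) (by norm_num)
  have hz4 : ‖q^14‖ ≤ 1/4 := le_trans (hpow' 14) (by norm_num)
  -- tail errors
  set e1 : ℂ := (∏' n : ℕ, (1 - q^2 * (q^2)^2 * (q^2)^n)) - 1 with he1def
  set e2 : ℂ := (∏' n : ℕ, (1 - q * (q^2)^2 * (q^2)^n)) - 1 with he2def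
  set e3 : ℂ := (∏' n : ℕ, (1 - q^7 * (q^14)^n)) - 1 with he3def
  set e4 : ℂ := (∏' n : ℕ, (1 - q^14 * (q^14)^n)) - 1 with he4def
  have hfac1 : qPoch (q^2) (q^2) = (1-q^2)*(1-q^2*q^2)*(1+e1) := by
    rw [qPoch, GQE.prod_split hw2 hw2, he1def]; ring
  have hfac2 : qPoch q (q^2) = (1-q)*(1-q*q^2)*(1+e2) := by
    rw [qPoch, GQE.prod_split hr hw2, he2def]; ring
  have hfac3 : qPoch (q^7) (q^14) = 1 + e3 := by rw [qPoch, he3def]; ring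
  have hfac4 : qPoch (q^14) (q^14) = 1 + e4 := by rw [qPoch, he4def]; ring
  -- error bounds
  have hb1 : ‖e1‖ ≤ 3*‖q‖^5 := by
    have h := GQE.prod_sub_one_bound hz1 hw2
    rw [← he1def] at h
    have h6 : ‖q^2*(q^2)^2‖ = ‖q‖^6 := by rw [show q^2*(q^2)^2 = q^6 by ring, norm_pow]
    rw [h6] at h
    have : ‖q‖^6 = ‖q‖^5 * ‖q‖ := by ring
    nlinarith [pow_nonneg hr0 5]
  have hb2 : ‖e2‖ ≤ 6*‖q‖^5 := by
    have h := GQE.prod_sub_one_bound hz2 hw2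
    rw [← he2def] at h
    have h5 : ‖q*(q^2)^2‖ = ‖q‖^5 := by rw [show q*(q^2)^2 = q^5 by ring, norm_pow]
    rw [h5] at h
    linarith
  have hb3 : ‖e3‖ ≤ 2*‖q‖^5 := by
    have h := GQE.prod_sub_one_bound hz3 hw14
    rw [← he3def, norm_pow] at h
    have h7 : ‖q‖^7 = ‖q‖^5 * ‖q‖^2 := by ring
    have := hpow 2
    nlinarith [pow_nonneg hr0 5, pow_nonneg hr0 2]
  have hb4 : ‖e4‖ ≤ ‖q‖^5 := by
    have h := GQE.prod_sub_one_bound hz4 hw14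
    rw [← he4def, norm_pow] at h
    have h14 : ‖q‖^14 = ‖q‖^5 * ‖q‖^9 := by ring
    have h9 : ‖q‖^9 ≤ 1/512 := by have := hpow 9; norm_num at this ⊢; linarith
    nlinarith [pow_nonneg hr0 5, pow_nonneg hr0 9]
  -- nonvanishing
  have hone : ∀ u : ℂ, ‖u‖ ≤ 1/2 → (1:ℂ) - u ≠ 0 := fun u hu =>
    GQE.factor_ne_zero (lt_of_le_of_lt hu (by norm_num))
  have hq5half : ‖q‖^5 ≤ 1/32 := by have := hpow 5; linarith
  have he2small : ‖e2‖ ≤ 1/2 := by linarith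
  have he3small : ‖e3‖ ≤ 1/2 := by linarith
  have he4small : ‖e4‖ ≤ 1/2 := by linarith
  have hplus : ∀ e : ℂ, ‖e‖ ≤ 1/2 → (1:ℂ) + e ≠ 0 := by
    intro e he
    have := hone (-e) (by simpa using he)
    simpa [sub_neg_eq_add] using this
  have hq3 : ‖q*q^2‖ ≤ 1/2 := by
    rw [show q*q^2 = q^3 by ring]; exact le_trans (hpow' 3) (by norm_num)
  have hne2 : qPoch q (q^2) ≠ 0 := by
    rw [hfac2]
    exact mul_ne_zero (mul_ne_zero (hone q hr) (hone _ hq3)) (hplus e2 he2small)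
  have hne3 : qPoch (q^7) (q^14) ≠ 0 := by rw [hfac3]; exact hplus e3 he3small
  have hne4 : qPoch (q^14) (q^14) ≠ 0 := by rw [hfac4]; exact hplus e4 he4small
  -- the exponential identity
  have hE32 : E τ (3/2) * E τ (1/4) = E τ (7/4) := by
    simp only [E]
    rw [← Complex.exp_add]
    congr 1
    ring
  have hEne14 : E τ (1/4) ≠ 0 := Complex.exp_ne_zero _
  have hEne74 : E τ (7/4) ≠ 0 := Complex.exp_ne_zero _
  have hkey : E τ (3/2) * (PiQ τ 1 / PiQ τ 7)
      = ((qPoch (q^2) (q^2) * qPoch (q^7) (q^14)) / (qPoch q (q^2) * qPoch (q^14) (q^14)))^2 := by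
    rw [hPiQ1, hPiQ7]
    have h32 : E τ (3/2) = E τ (7/4) / E τ (1/4) := by
      rw [eq_div_iff hEne14]; exact hE32
    rw [h32]
    field_simp [hne2, hne3, hne4, hEne14, hEne74]
  rw [hkey, hfac1, hfac2, hfac3, hfac4]
  have := GQE.final_bound hr hb1 hb2 hb3 hb4
  exact this
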